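/- Let a ∈ (0,1) and let x, y be real numbers with x² + y² = 1. Then there exists β ∈ [−a/√(1−a²), a/√(1−a²)] with cos(F₁(β)) = x and sin(F₁(β)) = y if and only if x ≥ cos((π/2)(1−a)); moreover, when such β exists it is unique. -/

import Mathlib

open Real Set

/-!
With `c = a / √(1 - a²)`, `m = π/2 (1 - a)`, `u = √((1 - a²)(1 + β²))` and `s = √(1 + β²)`,
one computes `F₁' β = (tan (arcsin u) - arcsin u) / s³ > 0` on `(-c, c)`. Since `F₁` is odd and
`F₁ c = m`, it maps `[-c, c]` bijectively onto `[-m, m]`, and as `m < π/2` the angles in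
`[-m, m]` parametrize bijectively the unit vectors `(x, y)` with `x ≥ cos m`.
-/

/-- The argument function `F₁(β)` in the short-time case. -/
noncomputable def F₁ (a β : ℝ) : ℝ :=
  -(β / Real.sqrt (1 + β^2)) * Real.arcsin (Real.sqrt ((1 - a^2) * (1 + β^2))) +
    Real.arcsin (β * Real.sqrt (1 - a^2) / a)

lemma cos_le_cos_of_mem_Icc_neg {m θ : ℝ} (hm : m ≤ π) (hθ : θ ∈ Icc (-m) m) :
    cos m ≤ cos θ := by
  rw [← cos_abs θ]
  exact cos_le_cos_of_nonneg_of_le_pi (abs_nonneg θ) hm (abs_le.2 hθ)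

lemma exists_mem_Icc_neg_cos_sin_eq {m x y : ℝ} (hm0 : 0 ≤ m) (hm : m ≤ π / 2)
    (hxy : x ^ 2 + y ^ 2 = 1) (hx : cos m ≤ x) :
    ∃ θ ∈ Icc (-m) m, cos θ = x ∧ sin θ = y := by
  have hx0 : 0 ≤ x := (cos_nonneg_of_mem_Icc ⟨by linarith, hm⟩).trans hx
  have hy : y ∈ Icc (-1) 1 :=
    abs_le.1 (abs_le_of_sq_le_sq (by linarith [sq_nonneg x]) zero_le_one)
  have hy_sin : y ∈ Icc (-sin m) (sin m) := by
    refine abs_le.1 (abs_le_of_sq_le_sq ?_ (sin_nonneg_of_nonneg_of_le_pi hm0 (by linarith)))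
    nlinarith [sin_sq_add_cos_sq m, cos_nonneg_of_mem_Icc ⟨by linarith, hm⟩]
  have hm_mem : m ∈ Icc (-(π / 2)) (π / 2) := ⟨by linarith, hm⟩
  refine ⟨arcsin y, ⟨?_, ?_⟩, ?_, sin_arcsin hy.1 hy.2⟩
  · exact (le_arcsin_iff_sin_le ⟨by linarith, by linarith⟩ hy).2
      (by rw [sin_neg]; exact hy_sin.1)
  · exact (arcsin_le_iff_le_sin hy hm_mem).2 hy_sin.2
  · rw [cos_arcsin, show 1 - y ^ 2 = x ^ 2 by linarith, sqrt_sq hx0]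

lemma arcsin_lt_div_sqrt_one_sub_sq {u : ℝ} (hu0 : 0 < u) (hu1 : u < 1) :
    arcsin u < u / √(1 - u ^ 2) := by
  rw [← tan_arcsin]
  exact lt_tan (arcsin_pos.2 hu0) (arcsin_lt_pi_div_two.2 hu1)

lemma hasDerivAt_div_sqrt_one_add_sq (x : ℝ) :
    HasDerivAt (fun x => x / √(1 + x ^ 2)) (1 / √(1 + x ^ 2) ^ 3) x := by
  have hpos : 0 < 1 + x ^ 2 := by positivity
  have hs := ((hasDerivAt_pow 2 x).const_add 1).sqrt hpos.ne'
  refine ((hasDerivAt_id' x).div hs (sqrt_pos.2 hpos).ne').congr_deriv ?_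
  have h2 := sq_sqrt hpos.le
  field_simp
  rw [h2]
  ring

lemma hasDerivAt_F₁ {a β : ℝ} (ha0 : 0 < a) (ha1 : a < 1)
    (hu1 : (1 - a ^ 2) * (1 + β ^ 2) < 1) :
    HasDerivAt (F₁ a)
      ((√((1 - a ^ 2) * (1 + β ^ 2)) / √(1 - √((1 - a ^ 2) * (1 + β ^ 2)) ^ 2)
        - arcsin √((1 - a ^ 2) * (1 + β ^ 2))) / √(1 + β ^ 2) ^ 3) β := by
  have hk : 0 < 1 - a ^ 2 := by nlinarith
  have hu0 : 0 < (1 - a ^ 2) * (1 + β ^ 2) := by positivity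
  set b := √(1 - a ^ 2)
  set s := √(1 + β ^ 2) with hs
  set u := √((1 - a ^ 2) * (1 + β ^ 2)) with hu
  have hb2 : b ^ 2 = 1 - a ^ 2 := sq_sqrt hk.le
  have hs2 : s ^ 2 = 1 + β ^ 2 := sq_sqrt (by positivity)
  have hu2 : u ^ 2 = (1 - a ^ 2) * (1 + β ^ 2) := sq_sqrt hu0.le
  have hbs : u = b * s := sqrt_mul hk.le _
  have hb0 : 0 < b := sqrt_pos.2 hk
  have hs0 : 0 < s := sqrt_pos.2 (by positivity)
  have hu0' : 0 < u := sqrt_pos.2 hu0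
  set w := √(1 - u ^ 2) with hw
  have hw0 : 0 < w := sqrt_pos.2 (by linarith)
  have hw2 : w ^ 2 = 1 - u ^ 2 := sq_sqrt (by linarith)
  -- `a² - (1 - a²) β² = 1 - u²` is what makes the two `arcsin` terms combine
  have hq2 : 1 - (β * b / a) ^ 2 = (w / a) ^ 2 := by
    rw [div_pow, div_pow, hw2, hu2, mul_pow, hb2]
    field_simp
    ring
  have hq1 : (β * b / a) ^ 2 < 1 := by
    have := div_pos hw0 ha0
    nlinarith
  have hq : √(1 - (β * b / a) ^ 2) = w / a := by
    rw [hq2, sqrt_sq (div_pos hw0 ha0).le]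
  have h1 := hasDerivAt_div_sqrt_one_add_sq β
  have h2 := (hasDerivAt_arcsin (x := u) (by linarith) (by nlinarith)).comp β
    ((((hasDerivAt_pow 2 β).const_add 1).const_mul (1 - a ^ 2)).sqrt hu0.ne')
  have h3 := (hasDerivAt_arcsin (x := β * b / a) (by nlinarith) (by nlinarith)).comp β
    (((hasDerivAt_id' β).mul_const b).div_const a)
  refine ((h1.neg.mul h2).add h3).congr_deriv ?_
  simp only [Function.comp, Pi.neg_apply, hq, ← hs, ← hu, ← hw]
  push_cast
  rw [hbs]
  field_simp
  rw [← hb2]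
  linear_combination s * b ^ 2 * hs2


lemma continuous_F₁ (a : ℝ) : Continuous (F₁ a) := by
  unfold F₁
  have h : Continuous fun β : ℝ => β / √(1 + β ^ 2) :=
    continuous_id.div (by fun_prop) fun β => by positivity
  exact (h.neg.mul (continuous_arcsin.comp (by fun_prop))).add
    (continuous_arcsin.comp (by fun_prop))

lemma F₁_neg (a β : ℝ) : F₁ a (-β) = -F₁ a β := by
  simp only [F₁, neg_sq, neg_div, neg_neg, neg_mul, arcsin_neg, neg_add]

lemma F₁_div_sqrt_one_sub_sq {a : ℝ} (ha0 : 0 < a) (ha1 : a < 1) :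
    F₁ a (a / √(1 - a ^ 2)) = π / 2 * (1 - a) := by
  have hk : 0 < 1 - a ^ 2 := by nlinarith
  set b := √(1 - a ^ 2)
  have hb0 : 0 < b := sqrt_pos.2 hk
  have hb2 : b ^ 2 = 1 - a ^ 2 := sq_sqrt hk.le
  have hs2 : 1 + (a / b) ^ 2 = (1 / b) ^ 2 := by
    field_simp
    linarith
  have hs : √(1 + (a / b) ^ 2) = 1 / b := by
    rw [hs2, sqrt_sq (by positivity)]
  have hu : (1 - a ^ 2) * (1 + (a / b) ^ 2) = 1 := by
    rw [hs2, ← hb2]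
    field_simp
  rw [F₁, hu, hs, sqrt_one, arcsin_one, div_mul_cancel₀ _ hb0.ne', div_self ha0.ne', arcsin_one]
  field_simp
  ring

lemma F₁_strictMonoOn {a : ℝ} (ha0 : 0 < a) (ha1 : a < 1) :
    StrictMonoOn (F₁ a) (Icc (-(a / √(1 - a ^ 2))) (a / √(1 - a ^ 2))) := by
  have hk : 0 < 1 - a ^ 2 := by nlinarith
  have hb0 : 0 < √(1 - a ^ 2) := sqrt_pos.2 hk
  have hb2 : √(1 - a ^ 2) ^ 2 = 1 - a ^ 2 := sq_sqrt hk.le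
  refine strictMonoOn_of_deriv_pos (convex_Icc _ _) (continuous_F₁ a).continuousOn ?_
  intro β hβ
  rw [interior_Icc, mem_Ioo, neg_div', div_lt_iff₀ hb0, lt_div_iff₀ hb0] at hβ
  have hu1 : (1 - a ^ 2) * (1 + β ^ 2) < 1 := by nlinarith
  rw [(hasDerivAt_F₁ ha0 ha1 hu1).deriv]
  have hu0 : 0 < √((1 - a ^ 2) * (1 + β ^ 2)) := sqrt_pos.2 (by positivity)
  have hu1' : √((1 - a ^ 2) * (1 + β ^ 2)) < 1 := (sqrt_lt' one_pos).2 (by rwa [one_pow])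
  exact div_pos (sub_pos.2 (arcsin_lt_div_sqrt_one_sub_sq hu0 hu1')) (by positivity)

lemma F₁_image_Icc {a : ℝ} (ha0 : 0 < a) (ha1 : a < 1) :
    F₁ a '' Icc (-(a / √(1 - a ^ 2))) (a / √(1 - a ^ 2)) =
      Icc (-(π / 2 * (1 - a))) (π / 2 * (1 - a)) := by
  have hc : 0 ≤ a / √(1 - a ^ 2) := by positivity
  rw [(continuous_F₁ a).continuousOn.image_Icc_of_monotoneOn (by linarith)
    (F₁_strictMonoOn ha0 ha1).monotoneOn, F₁_neg, F₁_div_sqrt_one_sub_sq ha0 ha1]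

/-- Solvability criterion for the system `cos (F₁ β) = x`, `sin (F₁ β) = y`:
a solution `β ∈ [−a/√(1−a²), a/√(1−a²)]` exists iff `x ≥ cos((π/2)(1−a))`,
and the solution is unique when it exists. -/
theorem F₁_system_solvable (a x y : ℝ) (ha : a ∈ Set.Ioo (0:ℝ) 1) (hxy : x^2 + y^2 = 1) :
    ((∃ β ∈ Set.Icc (-(a / Real.sqrt (1 - a^2))) (a / Real.sqrt (1 - a^2)),
        Real.cos (F₁ a β) = x ∧ Real.sin (F₁ a β) = y) ↔
      x ≥ Real.cos (Real.pi / 2 * (1 - a))) ∧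
    (∀ β₁ ∈ Set.Icc (-(a / Real.sqrt (1 - a^2))) (a / Real.sqrt (1 - a^2)),
      ∀ β₂ ∈ Set.Icc (-(a / Real.sqrt (1 - a^2))) (a / Real.sqrt (1 - a^2)),
        Real.cos (F₁ a β₁) = x → Real.sin (F₁ a β₁) = y →
        Real.cos (F₁ a β₂) = x → Real.sin (F₁ a β₂) = y → β₁ = β₂) := by
  obtain ⟨ha0, ha1⟩ := ha
  have himage := F₁_image_Icc ha0 ha1
  have hm0 : 0 ≤ π / 2 * (1 - a) := by nlinarith [pi_pos]
  have hm : π / 2 * (1 - a) ≤ π / 2 := by nlinarith [pi_pos]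
  have hF_mem {β} (hβ : β ∈ Icc (-(a / √(1 - a ^ 2))) (a / √(1 - a ^ 2))) :
      F₁ a β ∈ Icc (-(π / 2 * (1 - a))) (π / 2 * (1 - a)) :=
    himage ▸ mem_image_of_mem _ hβ
  refine ⟨⟨?_, fun hx => ?_⟩, fun β₁ h₁ β₂ h₂ _ hs₁ _ hs₂ => ?_⟩
  · rintro ⟨β, hβ, rfl, -⟩
    exact cos_le_cos_of_mem_Icc_neg (by linarith [pi_pos]) (hF_mem hβ)
  · obtain ⟨θ, hθ, hcos, hsin⟩ := exists_mem_Icc_neg_cos_sin_eq hm0 hm hxy hx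
    obtain ⟨β, hβ, rfl⟩ := himage.symm ▸ hθ
    exact ⟨β, hβ, hcos, hsin⟩
  · have hIcc : Icc (-(π / 2 * (1 - a))) (π / 2 * (1 - a)) ⊆ Icc (-(π / 2)) (π / 2) :=
      Icc_subset_Icc (by linarith) hm
    exact (F₁_strictMonoOn ha0 ha1).injOn h₁ h₂
      (injOn_sin (hIcc (hF_mem h₁)) (hIcc (hF_mem h₂)) (hs₁.trans hs₂.symm))
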